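/- Let G = ℤ_{A₁} × ⋯ × ℤ_{A_N} and suppose a_j divides A_j for every j = 1,…,N. Then a set Λ ⊆ G is a tiling complement of the cube Q_{a₁,…,a_N} = [a₁] × ⋯ × [a_N] (i.e., Q_{a₁,…,a_N} + Λ tiles G) if and only if Λ, regarded as a subset of Ĝ ≃ G, is a spectrum of the dual cube Q*_{a₁,…,a_N} = [A₁/a₁] × ⋯ × [A_N/a_N]. -/

import Mathlib

/-- The discrete cube `[a₁] × ⋯ × [a_N]` inside `ℤ_{A₁} × ⋯ × ℤ_{A_N}`. -/
def cube {N : ℕ} (A a : Fin N → ℕ) : Finset (∀ j, ZMod (A j)) :=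
  Finset.image (fun v : ∀ j, Fin (a j) => fun j => ((v j : ℕ) : ZMod (A j))) Finset.univ

/-- `E` tiles the abelian group `G` with translate set `T`. -/
def Tiles {G : Type*} [AddCommGroup G] (E T : Finset G) : Prop :=
  ∀ x : G, ∃! p : G × G, p.1 ∈ E ∧ p.2 ∈ T ∧ x = p.1 + p.2

/-- The character `e_λ(x) = exp(2πi Σ_j λ_j x_j / A_j)`. -/
noncomputable def ePi {N : ℕ} (A : Fin N → ℕ) (lam x : ∀ j, ZMod (A j)) : ℂ :=
  Complex.exp (2 * (Real.pi : ℂ) * Complex.I *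
    ∑ j, ((lam j).val : ℂ) * ((x j).val : ℂ) / (A j : ℂ))

/-- `Λ` is a spectrum of `E`. -/
def IsSpectrum {N : ℕ} (A : Fin N → ℕ) (E L : Finset (∀ j, ZMod (A j))) : Prop :=
  L.card = E.card ∧
  ∀ l ∈ L, ∀ m ∈ L, l ≠ m →
    ∑ x ∈ E, ePi A l x * (starRingEnd ℂ) (ePi A m x) = 0

/-!
Pair `G` with itself by `⟨ν, x⟩ = ∏ j, exp (2πi ν_j x_j / A_j)` and write
`F_E ν = ∑_{x ∈ E} ⟨ν, x⟩`. For a cube, `F_{Q_s}` is a product of geometric sums, so it vanishes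
at `ν` exactly when some coordinate has `ν_j ≠ 0` and `s_j ν_j = 0`. If `d_j s_j = A_j`, this
never happens on `Q_s - Q_s`, because `x ↦ d_j x` is injective on `[s_j] ⊆ ℤ_{A_j}`. Both
directions use this with `{d, s} = {a, A / a}`.

If `Λ` is a spectrum of `Q*`, then `F_{Q*}` vanishes on `(Λ - Λ) \ {0}`, which therefore misses
`Q - Q`: the sums `q + λ` are distinct, and there are `|G|` of them. Conversely a tiling gives
`F_Q · F_Λ = F_G`, which vanishes off `0`, so `F_Λ` vanishes on `(Q* - Q*) \ {0}`: the square
matrix `(⟨x, λ⟩)_{x ∈ Q*, λ ∈ Λ}` has orthogonal rows of equal length, hence orthogonal columns,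
which is the spectrum property.
-/

open Finset

lemma geom_sum_eq_zero_iff_of_ne_zero {K : Type*} [Field K] [CharZero K] {s : ℕ} (hs : s ≠ 0)
    (r : K) : ∑ t ∈ range s, r ^ t = 0 ↔ r ≠ 1 ∧ r ^ s = 1 := by
  rcases eq_or_ne r 1 with rfl | hr
  · simp [hs]
  · rw [geom_sum_eq hr, div_eq_zero_iff, sub_eq_zero, sub_eq_zero]
    simp [hr]

namespace ZMod

lemma injOn_natCast_range {n s : ℕ} (hs : s ≤ n) :
    Set.InjOn (Nat.cast : ℕ → ZMod n) (range s) := fun a ha b hb hab => by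
  have hlt : ∀ c ∈ (range s : Set ℕ), c < n := fun c hc => (mem_range.1 hc).trans_le hs
  simpa [val_natCast_of_lt (hlt a ha), val_natCast_of_lt (hlt b hb)] using
    congrArg val hab

variable {n : ℕ} [NeZero n]

lemma sum_range_stdAddChar_mul_eq_zero_iff {s : ℕ} (hs : s ≠ 0) (z : ZMod n) :
    ∑ t ∈ range s, stdAddChar (z * (t : ZMod n)) = 0 ↔ z ≠ 0 ∧ s • z = 0 := by
  have hpow : ∀ t : ℕ, stdAddChar (z * (t : ZMod n)) = stdAddChar z ^ t := fun t => by
    rw [← AddChar.map_nsmul_eq_pow, nsmul_eq_mul, mul_comm]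
  rw [sum_congr rfl fun t _ => hpow t, geom_sum_eq_zero_iff_of_ne_zero hs,
    ← AddChar.map_nsmul_eq_pow, ← (stdAddChar (N := n)).map_zero_eq_one,
    injective_stdAddChar.ne_iff, injective_stdAddChar.eq_iff]

lemma eq_of_nsmul_eq_nsmul {d s : ℕ} (hds : d * s = n) {x y : ZMod n} (hx : x.val < s)
    (hy : y.val < s) (hxy : d • x = d • y) : x = y := by
  have hd : 0 < d := Nat.pos_of_ne_zero (by rintro rfl; exact NeZero.ne n (by simp [← hds]))
  have hcast : ∀ z : ZMod n, d • z = ((d * z.val : ℕ) : ZMod n) := fun z => by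
    rw [nsmul_eq_mul, Nat.cast_mul, natCast_zmod_val]
  have hlt : ∀ m < s, d * m < n := fun m hm =>
    hds ▸ (Nat.mul_lt_mul_left hd).2 hm
  rw [hcast, hcast] at hxy
  have := congrArg val hxy
  rw [val_natCast_of_lt (hlt _ hx), val_natCast_of_lt (hlt _ hy)] at this
  exact val_injective n (Nat.eq_of_mul_eq_mul_left hd this)

end ZMod

namespace Tiles

variable {G : Type*} [AddCommGroup G] [Fintype G] {E T : Finset G}

lemma sum_sum_add {M : Type*} [AddCommMonoid M] (h : Tiles E T) (f : G → M) :
    ∑ e ∈ E, ∑ t ∈ T, f (e + t) = ∑ x, f x := by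
  rw [← sum_product' (f := fun e t => f (e + t))]
  refine sum_bij (fun p _ => p.1 + p.2) (fun _ _ => mem_univ _) ?_ ?_ (fun _ _ => rfl)
  · intro p hp q hq hpq
    rw [mem_product] at hp hq
    exact (h _).unique ⟨hp.1, hp.2, rfl⟩ ⟨hq.1, hq.2, hpq⟩
  · intro x _
    obtain ⟨p, ⟨he, ht, rfl⟩, -⟩ := h x
    exact ⟨p, mem_product.2 ⟨he, ht⟩, rfl⟩

lemma card_mul_card (h : Tiles E T) : #E * #T = Fintype.card G := by
  have := h.sum_sum_add fun _ => (1 : ℕ)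
  rwa [← card_univ, card_eq_sum_ones, card_eq_sum_ones, card_eq_sum_ones, sum_mul_sum]

end Tiles

lemma tiles_of_injOn_of_card_mul_card {G : Type*} [AddCommGroup G] [Fintype G] {E T : Finset G}
    (hinj : Set.InjOn (fun p : G × G => p.1 + p.2) (E ×ˢ T))
    (hcard : #E * #T = Fintype.card G) : Tiles E T := by
  classical
  have hsurj : (E ×ˢ T).image (fun p => p.1 + p.2) = univ :=
    eq_univ_of_card _ (by rw [card_image_of_injOn (by simpa using hinj), card_product, hcard])
  intro x
  obtain ⟨p, hp, rfl⟩ := mem_image.1 (hsurj ▸ mem_univ x)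
  rw [mem_product] at hp
  exact ⟨p, ⟨hp.1, hp.2, rfl⟩, fun q ⟨he, ht, hq⟩ =>
    hinj (by simpa using ⟨he, ht⟩) (by simpa using hp) hq.symm⟩

section Pairing

open ZMod

variable {N : ℕ} (A : Fin N → ℕ) [∀ j, NeZero (A j)]

noncomputable def pairing (ν x : ∀ j, ZMod (A j)) : ℂ := ∏ j, stdAddChar (ν j * x j)

variable {A}

lemma ePi_eq_pairing (ν x : ∀ j, ZMod (A j)) : ePi A ν x = pairing A ν x := by
  rw [ePi, mul_sum, Complex.exp_sum]
  refine prod_congr rfl fun j _ => ?_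
  have hcast : ν j * x j = (((ν j).val * (x j).val : ℤ) : ZMod (A j)) := by simp
  rw [hcast, stdAddChar_coe]
  push_cast
  ring_nf

lemma pairing_comm (ν x : ∀ j, ZMod (A j)) : pairing A ν x = pairing A x ν := by
  simp only [pairing, mul_comm]

lemma pairing_zero_left (x : ∀ j, ZMod (A j)) : pairing A 0 x = 1 := by
  simp [pairing]

lemma pairing_add_right (ν x y : ∀ j, ZMod (A j)) :
    pairing A ν (x + y) = pairing A ν x * pairing A ν y := by
  simp only [pairing, ← prod_mul_distrib, Pi.add_apply, mul_add, AddChar.map_add_eq_mul]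

lemma pairing_mul_conj_pairing (ν μ x : ∀ j, ZMod (A j)) :
    pairing A ν x * starRingEnd ℂ (pairing A μ x) = pairing A (ν - μ) x := by
  simp only [pairing, map_prod, ← AddChar.map_neg_eq_conj, ← prod_mul_distrib,
    ← AddChar.map_add_eq_mul, Pi.sub_apply, ← neg_mul, ← add_mul, ← sub_eq_add_neg]

lemma ePi_mul_conj_ePi (ν μ x : ∀ j, ZMod (A j)) :
    ePi A ν x * starRingEnd ℂ (ePi A μ x) = pairing A (ν - μ) x := by
  rw [ePi_eq_pairing, ePi_eq_pairing, pairing_mul_conj_pairing]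

end Pairing

section Cube

open ZMod Fintype

variable {N : ℕ} {A : Fin N → ℕ}

lemma cube_eq_piFinset (s : Fin N → ℕ) :
    cube A s = piFinset fun j => (range (s j)).image (Nat.cast : ℕ → ZMod (A j)) := by
  ext x
  simp only [cube, mem_image, mem_univ, true_and, mem_piFinset, mem_range]
  constructor
  · rintro ⟨v, rfl⟩ j
    exact ⟨v j, (v j).isLt, rfl⟩
  · intro h
    choose t ht hx using h
    exact ⟨fun j => ⟨t j, ht j⟩, funext hx⟩

lemma card_cube {s : Fin N → ℕ} (hs : ∀ j, s j ≤ A j) : #(cube A s) = ∏ j, s j := by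
  simp [cube_eq_piFinset, card_image_of_injOn (injOn_natCast_range (hs _))]

lemma sum_cube_prod {s : Fin N → ℕ} (hs : ∀ j, s j ≤ A j) (f : ∀ j, ZMod (A j) → ℂ) :
    ∑ x ∈ cube A s, ∏ j, f j (x j) = ∏ j, ∑ t ∈ range (s j), f j t := by
  rw [cube_eq_piFinset, ← prod_univ_sum]
  exact prod_congr rfl fun j _ => sum_image (injOn_natCast_range (hs j))

variable [∀ j, NeZero (A j)]

lemma mem_cube_iff {s : Fin N → ℕ} {x : ∀ j, ZMod (A j)} :
    x ∈ cube A s ↔ ∀ j, (x j).val < s j := by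
  simp only [cube_eq_piFinset, mem_piFinset, mem_image, mem_range]
  refine forall_congr' fun j => ⟨?_, fun h => ⟨_, h, natCast_zmod_val _⟩⟩
  rintro ⟨t, ht, hx⟩
  rw [← hx]
  exact (val_natCast (A j) t ▸ Nat.mod_le t (A j)).trans_lt ht

lemma sum_cube_pairing_eq_zero_iff {s : Fin N → ℕ} (hs : ∀ j, s j ≤ A j) (hs0 : ∀ j, s j ≠ 0)
    (ν : ∀ j, ZMod (A j)) :
    ∑ x ∈ cube A s, pairing A ν x = 0 ↔ ∃ j, ν j ≠ 0 ∧ s j • ν j = 0 := by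
  simp only [pairing]
  rw [sum_cube_prod hs fun j z => stdAddChar (ν j * z)]
  simp only [prod_eq_zero_iff, mem_univ, true_and, sum_range_stdAddChar_mul_eq_zero_iff (hs0 _)]

lemma cube_self : cube A A = univ :=
  eq_univ_of_forall fun x => mem_cube_iff.2 fun j => val_lt (x j)

lemma sum_pairing_eq_zero {ν : ∀ j, ZMod (A j)} (hν : ν ≠ 0) : ∑ x, pairing A ν x = 0 := by
  rw [← cube_self, sum_cube_pairing_eq_zero_iff (fun _ => le_rfl) (fun j => NeZero.ne (A j))]
  obtain ⟨j, hj⟩ := Function.ne_iff.1 hν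
  exact ⟨j, hj, by simp⟩

variable {d s : Fin N → ℕ}

lemma card_cube_mul_card_cube (h : ∀ j, d j * s j = A j) :
    #(cube A d) * #(cube A s) = Fintype.card (∀ j, ZMod (A j)) := by
  rw [card_cube fun j => Nat.le_of_dvd (NeZero.pos _) (Dvd.intro _ (h j)),
    card_cube fun j => Nat.le_of_dvd (NeZero.pos _) (Dvd.intro_left _ (h j)),
    ← prod_mul_distrib, Fintype.card_pi]
  simp [h]

lemma sum_cube_pairing_sub_ne_zero (h : ∀ j, d j * s j = A j) {x y : ∀ j, ZMod (A j)}
    (hx : x ∈ cube A s) (hy : y ∈ cube A s) : ∑ z ∈ cube A d, pairing A (x - y) z ≠ 0 := by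
  have hd0 : ∀ j, d j ≠ 0 := fun j hj => NeZero.ne (A j) (by rw [← h j, hj, zero_mul])
  rw [Ne, sum_cube_pairing_eq_zero_iff
    (fun j => Nat.le_of_dvd (NeZero.pos _) (Dvd.intro _ (h j))) hd0]
  rintro ⟨j, hne, hzero⟩
  rw [Pi.sub_apply, sub_ne_zero] at hne
  rw [Pi.sub_apply, nsmul_sub, sub_eq_zero] at hzero
  exact hne (eq_of_nsmul_eq_nsmul (h j) (mem_cube_iff.1 hx j) (mem_cube_iff.1 hy j) hzero)

end Cube

open scoped Matrix

lemma Matrix.mul_eq_smul_one_comm_of_card_eq {m n K : Type*} [Fintype m] [Fintype n]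
    [DecidableEq m] [DecidableEq n] [Field K] {M : Matrix m n K} {M' : Matrix n m K} {c : K}
    (hc : c ≠ 0) (hmn : Fintype.card m = Fintype.card n) (h : M * M' = c • 1) :
    M' * M = c • 1 := by
  have hinv : (c⁻¹ • M) * M' = 1 := by
    rw [Matrix.smul_mul, h, smul_smul, inv_mul_cancel₀ hc, one_smul]
  have := (Matrix.mul_eq_one_comm_of_card_eq m n K hmn).1 hinv
  rw [Matrix.mul_smul] at this
  rw [← this, smul_smul, mul_inv_cancel₀ hc, one_smul]

section Duality

variable {N : ℕ} {A : Fin N → ℕ} [∀ j, NeZero (A j)]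

lemma sum_pairing_sub_eq_zero_of_card_eq {D L : Finset (∀ j, ZMod (A j))} (hcard : #D = #L)
    (hD : ∀ x ∈ D, ∀ y ∈ D, x ≠ y → ∑ l ∈ L, pairing A (x - y) l = 0) :
    ∀ l ∈ L, ∀ m ∈ L, l ≠ m → ∑ x ∈ D, pairing A (l - m) x = 0 := by
  classical
  let M : Matrix D L ℂ := Matrix.of fun x l => pairing A x l
  have hMM : M * Mᴴ = (#L : ℂ) • 1 := by
    ext x y
    simp only [M, Matrix.mul_apply, Matrix.conjTranspose_apply, Matrix.of_apply,
      RCLike.star_def, pairing_mul_conj_pairing, Matrix.smul_apply, Matrix.one_apply]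
    rw [sum_coe_sort L fun l => pairing A (x - y) l]
    split_ifs with hxy
    · simp [hxy, pairing_zero_left]
    · rw [hD x x.2 y y.2 (Subtype.coe_injective.ne hxy), smul_zero]
  intro l hl m hm hlm
  have hL : (#L : ℂ) ≠ 0 := Nat.cast_ne_zero.2 (card_ne_zero_of_mem hl)
  have hMM' := congrFun₂
    (Matrix.mul_eq_smul_one_comm_of_card_eq hL (by simpa using hcard) hMM) ⟨m, hm⟩ ⟨l, hl⟩
  simp only [M, Matrix.mul_apply, Matrix.conjTranspose_apply, Matrix.of_apply, RCLike.star_def,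
    Matrix.smul_apply, Matrix.one_apply, Subtype.mk.injEq, hlm.symm, if_false, smul_zero] at hMM'
  rw [← hMM', ← sum_coe_sort D]
  refine sum_congr rfl fun x _ => ?_
  rw [mul_comm, pairing_comm _ l, pairing_comm _ m, pairing_mul_conj_pairing]

end Duality

section TilingSpectrum

variable {N : ℕ} {A a b : Fin N → ℕ} [∀ j, NeZero (A j)] {L : Finset (∀ j, ZMod (A j))}

lemma Tiles.sum_pairing_mul_sum_pairing {E T : Finset (∀ j, ZMod (A j))} (h : Tiles E T)
    (ν : ∀ j, ZMod (A j)) :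
    (∑ e ∈ E, pairing A ν e) * ∑ t ∈ T, pairing A ν t = ∑ x, pairing A ν x := by
  simp only [sum_mul_sum, ← pairing_add_right, h.sum_sum_add]

lemma Tiles.isSpectrum_cube (hab : ∀ j, a j * b j = A j) (hT : Tiles (cube A a) L) :
    IsSpectrum A (cube A b) L := by
  obtain ⟨⟨e, _⟩, ⟨he, -⟩, -⟩ := hT 0
  have hcard : #L = #(cube A b) := Nat.eq_of_mul_eq_mul_left (card_pos.2 ⟨e, he⟩)
    (hT.card_mul_card.trans (card_cube_mul_card_cube hab).symm)
  refine ⟨hcard, fun l hl m hm hlm => ?_⟩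
  simp only [ePi_mul_conj_ePi]
  refine sum_pairing_sub_eq_zero_of_card_eq hcard.symm (fun x hx y hy hxy => ?_) l hl m hm hlm
  have hprod := hT.sum_pairing_mul_sum_pairing (x - y)
  rw [sum_pairing_eq_zero (sub_ne_zero.2 hxy)] at hprod
  exact (mul_eq_zero.1 hprod).resolve_left (sum_cube_pairing_sub_ne_zero hab hx hy)

lemma IsSpectrum.tiles_cube (hab : ∀ j, a j * b j = A j) (hS : IsSpectrum A (cube A b) L) :
    Tiles (cube A a) L := by
  have hba : ∀ j, b j * a j = A j := fun j => (mul_comm _ _).trans (hab j)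
  refine tiles_of_injOn_of_card_mul_card ?_ (by rw [hS.1, card_cube_mul_card_cube hab])
  rintro ⟨e, l⟩ hel ⟨e', l'⟩ hel' heq
  simp only [Set.mem_prod, mem_coe] at hel hel' heq
  obtain rfl : l = l' := by
    by_contra hll
    have horth := hS.2 l hel.2 l' hel'.2 hll
    have hdiff : l - l' = e' - e := by rw [sub_eq_sub_iff_add_eq_add, add_comm l, heq]
    simp only [ePi_mul_conj_ePi, hdiff] at horth
    exact sum_cube_pairing_sub_ne_zero hba hel'.1 hel.1 horth
  rw [add_right_cancel heq]

end TilingSpectrum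

theorem tiling_complement_iff_spectrum_of_dual_general {N : ℕ} (A a : Fin N → ℕ)
    [∀ j, NeZero (A j)] (hdvd : ∀ j, a j ∣ A j)
    (L : Finset (∀ j, ZMod (A j))) :
    Tiles (cube A a) L ↔ IsSpectrum A (cube A (fun j => A j / a j)) L := by
  have hab : ∀ j, a j * (A j / a j) = A j := fun j => Nat.mul_div_cancel' (hdvd j)
  exact ⟨Tiles.isSpectrum_cube hab, IsSpectrum.tiles_cube hab⟩

theorem tiling_complement_iff_spectrum_of_dual {N : ℕ} (A a : Fin N → ℕ)
    [∀ j, NeZero (A j)] (ha : ∀ j, 0 < a j) (hdvd : ∀ j, a j ∣ A j)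
    (L : Finset (∀ j, ZMod (A j))) :
    Tiles (cube A a) L ↔ IsSpectrum A (cube A (fun j => A j / a j)) L :=
  tiling_complement_iff_spectrum_of_dual_general A a hdvd L
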